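/- Under the same hypotheses, η = 1 − |v|² satisfies the ODE η'' − 2ω·ln(1−η) + (c² − 4ω)·η = 0. -/

import Mathlib

/-!
Writing `G = conj v · v'`, the equation gives `conj v · v'' = -i c G - ω (1 - |v|²)`, so
`Im G' = -c Re G = (c/2) η'` and `Im G - (c/2) η` is a first integral; similarly
`|v'|² + ω ln |v|² + ω (1 - |v|²)` is one. Both vanish at infinity, hence everywhere, which gives
`Im G = (c/2) η` and `|v'|² = -ω ln (1 - η) - ω η`. Substituting into
`η'' = -2 (|v'|² + Re (conj v · v''))` yields the equation.
-/

open Complex ComplexConjugate Filter Topology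

lemma HasDerivAt.complex_re {f : ℝ → ℂ} {f' : ℂ} {x : ℝ} (h : HasDerivAt f f' x) :
    HasDerivAt (fun y => (f y).re) f'.re x :=
  reCLM.hasFDerivAt.comp_hasDerivAt x h

lemma HasDerivAt.complex_im {f : ℝ → ℂ} {f' : ℂ} {x : ℝ} (h : HasDerivAt f f' x) :
    HasDerivAt (fun y => (f y).im) f'.im x :=
  imCLM.hasFDerivAt.comp_hasDerivAt x h

lemma HasDerivAt.norm_sq_complex {f : ℝ → ℂ} {f' : ℂ} {x : ℝ} (h : HasDerivAt f f' x) :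
    HasDerivAt (‖f ·‖ ^ 2) (2 * (conj (f x) * f').re) x := by
  simpa [Complex.inner, mul_comm] using h.norm_sq

lemma eq_of_hasDerivAt_zero_of_tendsto_atTop {E : Type*} [NormedAddCommGroup E]
    [NormedSpace ℝ E] {f : ℝ → E} {a : E} (hf : ∀ x, HasDerivAt f 0 x)
    (hlim : Tendsto f atTop (𝓝 a)) (x : ℝ) : f x = a := by
  have hconst : f = fun _ => f x :=
    funext fun y => is_const_of_deriv_eq_zero (fun z => (hf z).differentiableAt)
      (fun z => (hf z).deriv) y x
  rw [hconst] at hlim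
  exact tendsto_nhds_unique tendsto_const_nhds hlim

section PointwiseIdentities

variable {c ω : ℝ} {z w u : ℂ}

lemma conj_mul_eq_of_ode (hz : z ≠ 0)
    (h : I * c * w + u + ω * (z / ((‖z‖ ^ 2 : ℝ) : ℂ)) * (1 - ((‖z‖ ^ 2 : ℝ) : ℂ)) = 0) :
    conj z * u = -(I * c) * (conj z * w) - ω * (1 - ‖z‖ ^ 2) := by
  push_cast at h
  have hunit : conj z * (z / (‖z‖ : ℂ) ^ 2) = 1 := by
    rw [mul_div_assoc', conj_mul', div_self (by simpa using hz)]
  linear_combination conj z * h - ω * (1 - (‖z‖ : ℂ) ^ 2) * hunit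

lemma re_conj_mul_eq_of_ode (hz : z ≠ 0)
    (h : I * c * w + u + ω * (z / ((‖z‖ ^ 2 : ℝ) : ℂ)) * (1 - ((‖z‖ ^ 2 : ℝ) : ℂ)) = 0) :
    (conj z * u).re = c * (conj z * w).im - ω * (1 - ‖z‖ ^ 2) := by
  rw [conj_mul_eq_of_ode hz h]
  simp [← ofReal_pow]

lemma im_conj_mul_eq_of_ode (hz : z ≠ 0)
    (h : I * c * w + u + ω * (z / ((‖z‖ ^ 2 : ℝ) : ℂ)) * (1 - ((‖z‖ ^ 2 : ℝ) : ℂ)) = 0) :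
    (conj z * u).im = -c * (conj z * w).re := by
  rw [conj_mul_eq_of_ode hz h]
  simp [← ofReal_pow]

lemma re_conj_deriv_mul_eq_of_ode
    (h : I * c * w + u + ω * (z / ((‖z‖ ^ 2 : ℝ) : ℂ)) * (1 - ((‖z‖ ^ 2 : ℝ) : ℂ)) = 0) :
    (conj w * u).re = -ω * (1 - ‖z‖ ^ 2) / ‖z‖ ^ 2 * (conj z * w).re := by
  have hu : conj w * u = -(I * c) * ((‖w‖ ^ 2 : ℝ) : ℂ)
      + ((-ω * (1 - ‖z‖ ^ 2) / ‖z‖ ^ 2 : ℝ) : ℂ) * conj (conj z * w) := by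
    push_cast at h ⊢
    rw [map_mul, conj_conj, ← conj_mul']
    linear_combination conj w * h
  rw [hu, add_re, re_ofReal_mul, conj_re]
  simp [-ofReal_pow]

end PointwiseIdentities

noncomputable def momentum (c : ℝ) (v : ℝ → ℂ) (σ : ℝ) : ℝ :=
  (conj (v σ) * deriv v σ).im - c / 2 * (1 - ‖v σ‖ ^ 2)

noncomputable def energy (ω : ℝ) (v : ℝ → ℂ) (σ : ℝ) : ℝ :=
  ‖deriv v σ‖ ^ 2 + ω * Real.log (‖v σ‖ ^ 2) + ω * (1 - ‖v σ‖ ^ 2)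

section FirstIntegrals

variable {c ω : ℝ} {v : ℝ → ℂ}

lemma hasDerivAt_conj_mul_deriv (hv : ContDiff ℝ 2 v) (σ : ℝ) :
    HasDerivAt (fun s => conj (v s) * deriv v s)
      (conj (deriv v σ) * deriv v σ + conj (v σ) * deriv (deriv v) σ) σ := by
  have hconj : HasDerivAt (fun s => conj (v s)) (conj (deriv v σ)) σ := by
    simpa [Complex.star_def] using (hv.differentiable two_ne_zero σ).hasDerivAt.star
  exact hconj.mul (hv.differentiable_deriv_two σ).hasDerivAt

lemma hasDerivAt_momentum (hv : ContDiff ℝ 2 v) {σ : ℝ} (hz : v σ ≠ 0)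
    (h : I * (c : ℂ) * deriv v σ + deriv (deriv v) σ
        + (ω : ℂ) * (v σ / ((‖v σ‖^2 : ℝ) : ℂ)) * (1 - ((‖v σ‖^2 : ℝ) : ℂ)) = 0) :
    HasDerivAt (momentum c v) 0 σ := by
  have hG := (hasDerivAt_conj_mul_deriv hv σ).complex_im
  have hF := (hv.differentiable two_ne_zero σ).hasDerivAt.norm_sq_complex
  have hη := (hF.const_sub 1).const_mul (c / 2)
  refine (hG.sub hη).congr_deriv ?_
  rw [add_im, im_conj_mul_eq_of_ode hz h, conj_mul', ← ofReal_pow, ofReal_im]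
  ring

lemma hasDerivAt_energy (hv : ContDiff ℝ 2 v) {σ : ℝ} (hz : v σ ≠ 0)
    (h : I * (c : ℂ) * deriv v σ + deriv (deriv v) σ
        + (ω : ℂ) * (v σ / ((‖v σ‖^2 : ℝ) : ℂ)) * (1 - ((‖v σ‖^2 : ℝ) : ℂ)) = 0) :
    HasDerivAt (energy ω v) 0 σ := by
  have hW := (hv.differentiable_deriv_two σ).hasDerivAt.norm_sq_complex
  have hF := (hv.differentiable two_ne_zero σ).hasDerivAt.norm_sq_complex
  have hF_ne : ‖v σ‖ ^ 2 ≠ 0 := by positivity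
  have hlog := (Real.hasDerivAt_log hF_ne).comp σ hF
  refine ((hW.add (hlog.const_mul ω)).add ((hF.const_sub 1).const_mul ω)).congr_deriv ?_
  rw [re_conj_deriv_mul_eq_of_ode h]
  field_simp
  ring

lemma tendsto_conj_mul_deriv_atTop (hv' : Tendsto (deriv v) atTop (𝓝 0))
    (hη : Tendsto (fun σ => 1 - ‖v σ‖ ^ 2) atTop (𝓝 0)) :
    Tendsto (fun σ => conj (v σ) * deriv v σ) atTop (𝓝 0) := by
  have hnorm : Tendsto (‖v ·‖) atTop (𝓝 1) := by
    simpa using (hη.const_sub 1).sqrt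
  rw [tendsto_zero_iff_norm_tendsto_zero]
  simpa using hnorm.mul hv'.norm

lemma tendsto_momentum_atTop (hv' : Tendsto (deriv v) atTop (𝓝 0))
    (hη : Tendsto (fun σ => 1 - ‖v σ‖ ^ 2) atTop (𝓝 0)) :
    Tendsto (momentum c v) atTop (𝓝 0) := by
  have hG := tendsto_conj_mul_deriv_atTop hv' hη
  have h := (continuous_im.tendsto 0 |>.comp hG).sub (hη.const_mul (c / 2))
  rwa [zero_im, mul_zero, sub_zero] at h

lemma tendsto_energy_atTop (hv' : Tendsto (deriv v) atTop (𝓝 0))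
    (hη : Tendsto (fun σ => 1 - ‖v σ‖ ^ 2) atTop (𝓝 0)) :
    Tendsto (energy ω v) atTop (𝓝 0) := by
  have hF : Tendsto (‖v ·‖ ^ 2) atTop (𝓝 1) := by simpa using hη.const_sub 1
  have hlog := (Real.continuousAt_log one_ne_zero).tendsto.comp hF
  have h := ((hv'.norm.pow 2).add (hlog.const_mul ω)).add (hη.const_mul ω)
  rwa [norm_zero, Real.log_one, mul_zero, add_zero, zero_pow two_ne_zero, add_zero] at h

lemma deriv_deriv_one_sub_norm_sq (hv : ContDiff ℝ 2 v) (σ : ℝ) :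
    deriv (deriv fun s => 1 - ‖v s‖ ^ 2) σ
      = -2 * (‖deriv v σ‖ ^ 2 + (conj (v σ) * deriv (deriv v) σ).re) := by
  have hη' : deriv (fun s => 1 - ‖v s‖ ^ 2) = fun s => -2 * (conj (v s) * deriv v s).re := by
    funext s
    rw [((hv.differentiable two_ne_zero s).hasDerivAt.norm_sq_complex.const_sub 1).deriv]
    ring
  rw [hη', ((hasDerivAt_conj_mul_deriv hv σ).complex_re.const_mul (-2)).deriv, add_re, conj_mul']
  simp [← ofReal_pow]

end FirstIntegrals

theorem stmt_18 (c ω : ℝ) (v : ℝ → ℂ)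
    (hv : ContDiff ℝ 2 v) (hne : ∀ σ, v σ ≠ 0)
    (hODE : ∀ σ : ℝ,
      I * (c : ℂ) * deriv v σ + deriv (deriv v) σ
        + (ω : ℂ) * (v σ / ((‖v σ‖^2 : ℝ) : ℂ)) * (1 - ((‖v σ‖^2 : ℝ) : ℂ)) = 0)
    (hv' : Tendsto (deriv v) atTop (nhds 0))
    (hη : Tendsto (fun σ => 1 - ‖v σ‖^2) atTop (nhds 0)) :
    ∀ σ : ℝ,
      deriv (deriv (fun s => 1 - ‖v s‖^2)) σ
        - 2*ω*Real.log (1 - (1 - ‖v σ‖^2))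
        + (c^2 - 4*ω) * (1 - ‖v σ‖^2) = 0 := by
  intro σ
  have hmomentum : momentum c v σ = 0 := eq_of_hasDerivAt_zero_of_tendsto_atTop
    (fun s => hasDerivAt_momentum hv (hne s) (hODE s)) (tendsto_momentum_atTop hv' hη) σ
  have henergy : energy ω v σ = 0 := eq_of_hasDerivAt_zero_of_tendsto_atTop
    (fun s => hasDerivAt_energy hv (hne s) (hODE s)) (tendsto_energy_atTop hv' hη) σ
  rw [deriv_deriv_one_sub_norm_sq hv σ, re_conj_mul_eq_of_ode (hne σ) (hODE σ), sub_sub_cancel]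
  unfold momentum at hmomentum
  unfold energy at henergy
  linear_combination -2 * henergy - 2 * c * hmomentum
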